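/- Let A, B : ℚ_p^N → ℝ be radial integrable functions, U, Z ∈ X_∞, let f : ℝ → ℝ be a bounded Lipschitz function with f(0) = 0, and let X be the solution (defined for all t ≥ 0) of the integral equation X(·,t) = e^{−t} X₀ + ∫₀^t e^{−(t−s)} H(X(·,s)) ds with X₀ ∈ X_∞. Suppose that for every x ∈ ℚ_p^N the pointwise limit X*(x) = lim_{t→∞} X(x,t) exists. Then X* is a stationary state, i.e. X*(x) = ∫_{ℚ_p^N} A(‖x−y‖_p) f(X*(y)) d^N y + ∫_{ℚ_p^N} B(‖x−y‖_p) U(y) d^N y + Z(x) for all x, and moreover X*(x) ≥ −‖f‖_∞ ‖A‖_{L¹} − ‖U‖_∞ ‖B‖_{L¹} + Z(x) for all x ∈ ℚ_p^N. -/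

import Mathlib

open MeasureTheory Filter
open intervalIntegral

/-- A function on `ℚ_p^N` (with the sup norm) is *radial* if its value depends only on the norm. -/
def IsRadial {p N : ℕ} [Fact p.Prime] (E : (Fin N → ℚ_[p]) → ℝ) : Prop :=
  ∀ x y : Fin N → ℚ_[p], ‖x‖ = ‖y‖ → E x = E y

/-- Membership in `X_∞`: continuous and vanishing at infinity. -/
def MemXInf {p N : ℕ} [Fact p.Prime] (g : (Fin N → ℚ_[p]) → ℝ) : Prop :=
  Continuous g ∧ Tendsto g (comap (fun x : Fin N → ℚ_[p] => ‖x‖) atTop) (nhds 0)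

/-- The operator `H` of a `p`-adic continuous CNN. -/
noncomputable def Hop {p N : ℕ} [Fact p.Prime] [MeasurableSpace (Fin N → ℚ_[p])]
    (μ : MeasureTheory.Measure (Fin N → ℚ_[p]))
    (A B U Z : (Fin N → ℚ_[p]) → ℝ) (f : ℝ → ℝ)
    (g : (Fin N → ℚ_[p]) → ℝ) (x : Fin N → ℚ_[p]) : ℝ :=
  (∫ y, A (x - y) * f (g y) ∂μ) + (∫ y, B (x - y) * U y ∂μ) + Z x


/-- Continuous-in-time `X_∞`-valued solution of the CNN integral equation, defined for
all `t ≥ 0`. -/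
def IsCNNIntegralSolutionInfty {p N : ℕ} [Fact p.Prime] [MeasurableSpace (Fin N → ℚ_[p])]
    (μ : MeasureTheory.Measure (Fin N → ℚ_[p]))
    (A B U Z : (Fin N → ℚ_[p]) → ℝ) (f : ℝ → ℝ)
    (X₀ : (Fin N → ℚ_[p]) → ℝ) (X : (Fin N → ℚ_[p]) → ℝ → ℝ) : Prop :=
  (∀ t : ℝ, 0 ≤ t → MemXInf (fun x => X x t)) ∧
  (∀ t₀ : ℝ, 0 ≤ t₀ → ∀ ε > (0:ℝ), ∃ δ > (0:ℝ), ∀ t : ℝ, 0 ≤ t →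
      |t - t₀| < δ → ∀ x : Fin N → ℚ_[p], |X x t - X x t₀| ≤ ε) ∧
  (∀ t : ℝ, 0 ≤ t → ∀ x : Fin N → ℚ_[p],
      X x t = Real.exp (-t) * X₀ x +
        ∫ s in (0:ℝ)..t, Real.exp (-(t - s)) * Hop μ A B U Z f (fun y => X y s) x)



lemma exp_integral_aux (t a b : ℝ) :
    ∫ s in a..b, Real.exp (s - t) = Real.exp (b - t) - Real.exp (a - t) := by
  have : ∀ s, Real.exp (s - t) = Real.exp s * Real.exp (-t) := by
    intro s; rw [← Real.exp_add]; ring_nf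
  simp_rw [this]
  rw [intervalIntegral.integral_mul_const, integral_exp, ← Real.exp_add, ← Real.exp_add]
  rw [Real.exp_add, Real.exp_add]; ring

lemma avg_lemma (h : ℝ → ℝ) (M : ℝ) (hM : ∀ s, 0 ≤ s → |h s| ≤ M)
    (hc : ContinuousOn h (Set.Ici 0)) (l : ℝ)
    (hl : Tendsto h atTop (nhds l)) :
    Tendsto (fun t => ∫ s in (0:ℝ)..t, Real.exp (-(t - s)) * h s) atTop (nhds l) := by
  rw [Metric.tendsto_nhds]
  intro ε hε
  obtain ⟨T₀, hT₀⟩ : ∃ T₀, ∀ s ≥ T₀, |h s - l| ≤ ε / 3 := by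
    obtain ⟨T₀, hT₀⟩ := (Metric.tendsto_atTop.mp hl) (ε/3) (by linarith)
    exact ⟨T₀, fun s hs => le_of_lt (by simpa [Real.dist_eq] using hT₀ s hs)⟩
  set T := max T₀ 0 with hTdef
  have hT0 : (0:ℝ) ≤ T := le_max_right _ _
  have hsmall : ∀ s, T ≤ s → |h s - l| ≤ ε / 3 := fun s hs => hT₀ s (le_trans (le_max_left _ _) hs)
  have hM0 : 0 ≤ M := le_trans (abs_nonneg _) (hM 0 le_rfl)
  have htail : Tendsto (fun t => (M + 2 * |l|) * Real.exp (T - t)) atTop (nhds 0) := by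
    have h2 : Tendsto (fun t : ℝ => ((M + 2 * |l|) * Real.exp T) * Real.exp (-t)) atTop
        (nhds (((M + 2 * |l|) * Real.exp T) * 0)) :=
      Real.tendsto_exp_neg_atTop_nhds_zero.const_mul _
    simp only [mul_zero] at h2
    refine h2.congr (fun t => ?_)
    rw [show T - t = T + (-t) by ring, Real.exp_add]; ring
  have hev : ∀ᶠ t in atTop, (M + 2 * |l|) * Real.exp (T - t) < ε / 3 := by
    filter_upwards [(Metric.tendsto_nhds.mp htail) (ε/3) (by linarith)] with t ht
    rw [Real.dist_eq, sub_zero] at ht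
    exact (le_abs_self _).trans_lt ht
  filter_upwards [hev, eventually_ge_atTop T] with t hev1 hTt
  have ht0 : (0:ℝ) ≤ t := le_trans hT0 hTt
  rw [Real.dist_eq]
  have hec : ∀ c : ℝ, Continuous fun s : ℝ => Real.exp (s - t) * c :=
    fun c => (Real.continuous_exp.comp (continuous_sub_right t)).mul continuous_const
  have hci : ∀ g : ℝ → ℝ, ContinuousOn g (Set.Ici 0) → ∀ a b : ℝ, 0 ≤ a → a ≤ b →
      IntervalIntegrable (fun s => Real.exp (s - t) * g s) volume a b := by
    intro g hg a b ha hab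
    apply ContinuousOn.intervalIntegrable
    apply ContinuousOn.mul
    · exact ((continuous_id.sub continuous_const).rexp).continuousOn
    · exact hg.mono (by rw [Set.uIcc_of_le hab]; intro z hz; exact le_trans ha hz.1)
  have hchl : ContinuousOn (fun s => h s - l) (Set.Ici 0) := hc.sub continuousOn_const
  have key : (∫ s in (0:ℝ)..t, Real.exp (-(t - s)) * h s) - l
      = (∫ s in (0:ℝ)..T, Real.exp (s - t) * (h s - l))
        + (∫ s in T..t, Real.exp (s - t) * (h s - l)) - Real.exp (0 - t) * l := by
    have e1 : ∀ s : ℝ, Real.exp (-(t - s)) * h s = Real.exp (s - t) * h s := by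
      intro s; congr 1; ring_nf
    rw [intervalIntegral.integral_congr (fun s _ => e1 s)]
    have i1 := hci h hc 0 T (le_refl 0) hT0
    have i2 := hci h hc T t hT0 hTt
    have hsplit : (∫ s in (0:ℝ)..t, Real.exp (s - t) * h s)
        = (∫ s in (0:ℝ)..T, Real.exp (s - t) * h s) + ∫ s in T..t, Real.exp (s - t) * h s :=
      (intervalIntegral.integral_add_adjacent_intervals i1 i2).symm
    have hexp : ∀ a b : ℝ, 0 ≤ a → a ≤ b → (∫ s in a..b, Real.exp (s - t) * (h s - l))
        = (∫ s in a..b, Real.exp (s - t) * h s)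
          - (Real.exp (b - t) - Real.exp (a - t)) * l := by
      intro a b ha hab
      have e2 : ∀ s : ℝ, Real.exp (s - t) * (h s - l)
          = Real.exp (s - t) * h s - Real.exp (s - t) * l := by intro s; ring
      rw [intervalIntegral.integral_congr (fun s _ => e2 s)]
      rw [intervalIntegral.integral_sub (hci h hc a b ha hab)
        ((hec l).intervalIntegrable a b)]
      rw [intervalIntegral.integral_mul_const, exp_integral_aux]
    rw [hexp 0 T (le_refl 0) hT0, hexp T t hT0 hTt, hsplit]
    simp only [sub_self, Real.exp_zero]
    ring
  rw [key]
  -- bound each piece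
  have bnd : ∀ (a b c : ℝ), 0 ≤ a → a ≤ b → 0 ≤ c → (∀ s, a ≤ s → s ≤ b → |h s - l| ≤ c) →
      |∫ s in a..b, Real.exp (s - t) * (h s - l)|
        ≤ c * (Real.exp (b - t) - Real.exp (a - t)) := by
    intro a b c ha hab hc0 hb
    have hae : ∀ᵐ s ∂(volume.restrict (Set.uIoc a b)),
        ‖Real.exp (s - t) * (h s - l)‖ ≤ Real.exp (s - t) * c := by
      refine ae_restrict_of_forall_mem measurableSet_uIoc ?_
      intro s hs
      rw [Set.uIoc_of_le hab] at hs
      rw [Real.norm_eq_abs, abs_mul, abs_of_nonneg (Real.exp_pos _).le]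
      exact mul_le_mul_of_nonneg_left (hb s hs.1.le hs.2) (Real.exp_pos _).le
    have h2 : IntervalIntegrable (fun s => Real.exp (s - t) * c) volume a b :=
      (hec c).intervalIntegrable a b
    have := intervalIntegral.norm_integral_le_abs_of_norm_le hae h2
    rw [Real.norm_eq_abs] at this
    refine this.trans ?_
    rw [intervalIntegral.integral_mul_const, exp_integral_aux]
    have hge : (0:ℝ) ≤ Real.exp (b - t) - Real.exp (a - t) :=
      sub_nonneg.mpr (Real.exp_le_exp.mpr (by linarith))
    rw [abs_of_nonneg (mul_nonneg hge hc0)]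
    linarith
  have b1 : |∫ s in (0:ℝ)..T, Real.exp (s - t) * (h s - l)|
      ≤ (M + |l|) * (Real.exp (T - t) - Real.exp (0 - t)) := by
    refine bnd 0 T (M + |l|) le_rfl hT0 (by positivity) (fun s hs1 _ => ?_)
    calc |h s - l| = |h s + -l| := by ring_nf
    _ ≤ |h s| + |(-l)| := abs_add_le _ _
    _ ≤ M + |l| := by rw [abs_neg]; exact add_le_add (hM s hs1) le_rfl
  have b2 : |∫ s in T..t, Real.exp (s - t) * (h s - l)|
      ≤ (ε / 3) * (Real.exp (t - t) - Real.exp (T - t)) :=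
    bnd T t (ε / 3) hT0 hTt (by linarith) (fun s hs1 _ => hsmall s hs1)
  have hEt : Real.exp (t - t) = 1 := by rw [sub_self, Real.exp_zero]
  rw [hEt] at b2
  have hE01 : Real.exp (0 - t) ≤ Real.exp (T - t) := Real.exp_le_exp.mpr (by linarith)
  have hE0pos : (0:ℝ) < Real.exp (0 - t) := Real.exp_pos _
  have htri : |(∫ s in (0:ℝ)..T, Real.exp (s - t) * (h s - l))
      + (∫ s in T..t, Real.exp (s - t) * (h s - l)) - Real.exp (0 - t) * l|
      ≤ |∫ s in (0:ℝ)..T, Real.exp (s - t) * (h s - l)|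
        + |∫ s in T..t, Real.exp (s - t) * (h s - l)| + Real.exp (0 - t) * |l| := by
    calc _ ≤ |(∫ s in (0:ℝ)..T, Real.exp (s - t) * (h s - l))
        + (∫ s in T..t, Real.exp (s - t) * (h s - l))| + |Real.exp (0 - t) * l| := abs_sub _ _
    _ ≤ _ := by
      rw [abs_mul, abs_of_nonneg hE0pos.le]
      exact add_le_add (abs_add_le _ _) le_rfl
  have habs : 0 ≤ |l| := abs_nonneg l
  nlinarith [mul_le_mul_of_nonneg_left hE01 habs, Real.exp_pos (T - t)]

/-- A function in `X_∞` is bounded. -/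
lemma memXInf_bounded {p N : ℕ} [Fact p.Prime] (g : (Fin N → ℚ_[p]) → ℝ) (hg : MemXInf g) :
    ∃ C : ℝ, 0 ≤ C ∧ ∀ y, |g y| ≤ C := by
  obtain ⟨hgc, hgv⟩ := hg
  have h1 : ∀ᶠ x in comap (fun x : Fin N → ℚ_[p] => ‖x‖) atTop, |g x| ≤ 1 := by
    filter_upwards [Metric.tendsto_nhds.mp hgv 1 one_pos] with x hx
    rw [Real.dist_eq, sub_zero] at hx
    exact hx.le
  rw [eventually_comap] at h1
  obtain ⟨R, hR⟩ := eventually_atTop.mp h1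
  have hcb : IsCompact (Metric.closedBall (0 : Fin N → ℚ_[p]) R) := isCompact_closedBall _ _
  obtain ⟨C', hC'⟩ := hcb.exists_bound_of_continuousOn hgc.continuousOn
  refine ⟨|C'| + 1, by positivity, fun y => ?_⟩
  by_cases hy : ‖y‖ ≤ R
  · have hmem : y ∈ Metric.closedBall (0 : Fin N → ℚ_[p]) R := by
      rwa [Metric.mem_closedBall, dist_zero_right]
    have h2 := hC' y hmem
    rw [Real.norm_eq_abs] at h2
    linarith [le_abs_self C']
  · push_neg at hy
    have := hR ‖y‖ hy.le y rfl
    linarith [abs_nonneg C']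

/-- If the pointwise limit `X*(x) = lim_{t→∞} X(x,t)` exists, then `X*`
is a stationary state of the CNN and
`X*(x) ≥ −‖f‖_∞ ‖A‖₁ − ‖U‖_∞ ‖B‖₁ + Z(x)` for all `x`. -/
theorem stmt11 (p N : ℕ) [Fact p.Prime] (hN : 1 ≤ N)
    [MeasurableSpace (Fin N → ℚ_[p])] [BorelSpace (Fin N → ℚ_[p])]
    (μ : Measure (Fin N → ℚ_[p])) [μ.IsAddHaarMeasure]
    (hμ : μ {x : Fin N → ℚ_[p] | ‖x‖ ≤ 1} = 1)
    (A B : (Fin N → ℚ_[p]) → ℝ) (hArad : IsRadial A) (hBrad : IsRadial B)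
    (hA : Integrable A μ) (hB : Integrable B μ)
    (U Z : (Fin N → ℚ_[p]) → ℝ) (hU : MemXInf U) (hZ : MemXInf Z)
    (f : ℝ → ℝ) (L : NNReal) (hf : LipschitzWith L f) (hf0 : f 0 = 0)
    (hfbdd : ∃ C : ℝ, ∀ r : ℝ, |f r| ≤ C)
    (X₀ : (Fin N → ℚ_[p]) → ℝ) (hX₀ : MemXInf X₀)
    (X : (Fin N → ℚ_[p]) → ℝ → ℝ)
    (hX : IsCNNIntegralSolutionInfty μ A B U Z f X₀ X)
    (Xstar : (Fin N → ℚ_[p]) → ℝ)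
    (hlim : ∀ x : Fin N → ℚ_[p], Tendsto (fun t => X x t) atTop (nhds (Xstar x))) :
    (∀ x : Fin N → ℚ_[p],
      Xstar x = (∫ y, A (x - y) * f (Xstar y) ∂μ) + (∫ y, B (x - y) * U y ∂μ) + Z x) ∧
    (∀ x : Fin N → ℚ_[p],
      Xstar x ≥ -((⨆ r : ℝ, |f r|) * ∫ y, |A y| ∂μ)
        - (⨆ y : Fin N → ℚ_[p], |U y|) * (∫ y, |B y| ∂μ) + Z x) := by
  obtain ⟨hXmem, hXuc, hXeq⟩ := hX
  obtain ⟨C, hC⟩ := hfbdd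
  have hC0 : 0 ≤ C := le_trans (abs_nonneg _) (hC 0)
  obtain ⟨CU, hCU0, hCU⟩ := memXInf_bounded U hU
  -- measurability of Xstar
  have hXstarMeas : AEStronglyMeasurable Xstar μ := by
    refine aestronglyMeasurable_of_tendsto_ae (u := (atTop : Filter ℕ))
      (f := fun n : ℕ => fun y => X y n) (fun n => ?_) (ae_of_all _ (fun y => ?_))
    · exact ((hXmem n (by positivity)).1).aestronglyMeasurable
    · exact (hlim y).comp tendsto_natCast_atTop_atTop
  have hfX : AEStronglyMeasurable (fun y => f (Xstar y)) μ :=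
    hf.continuous.comp_aestronglyMeasurable hXstarMeas
  -- main stationarity statement
  have hstat : ∀ x : Fin N → ℚ_[p],
      Xstar x = (∫ y, A (x - y) * f (Xstar y) ∂μ) + (∫ y, B (x - y) * U y ∂μ) + Z x := by
    intro x
    have IAc : Integrable (fun y => A (x - y)) μ := hA.comp_sub_left x
    have hAbs : Integrable (fun y => |A (x - y)|) μ := IAc.abs
    have hint : ∀ s : ℝ, 0 ≤ s → Integrable (fun y => A (x - y) * f (X y s)) μ := by
      intro s hs
      refine (hAbs.mul_const C).mono' (IAc.aestronglyMeasurable.mul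
        ((hf.continuous.comp (hXmem s hs).1).aestronglyMeasurable))
        (ae_of_all _ fun y => ?_)
      rw [Real.norm_eq_abs, abs_mul]
      exact mul_le_mul_of_nonneg_left (hC _) (abs_nonneg _)
    set g1 : ℝ → ℝ := fun s => ∫ y, A (x - y) * f (X y s) ∂μ with hg1def
    -- convergence of g1
    have hconv1 : Tendsto g1 atTop (nhds (∫ y, A (x - y) * f (Xstar y) ∂μ)) := by
      refine tendsto_integral_filter_of_dominated_convergence (fun y => |A (x - y)| * C)
        ?_ ?_ (hAbs.mul_const C) (ae_of_all _ (fun y => ?_))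
      · filter_upwards [eventually_ge_atTop (0:ℝ)] with s hs
        exact IAc.aestronglyMeasurable.mul
          ((hf.continuous.comp (hXmem s hs).1).aestronglyMeasurable)
      · refine Eventually.of_forall (fun s => ae_of_all _ (fun y => ?_))
        rw [Real.norm_eq_abs, abs_mul]
        exact mul_le_mul_of_nonneg_left (hC _) (abs_nonneg _)
      · exact ((hf.continuous.tendsto _).comp (hlim y)).const_mul _
    -- bound for g1
    have hg1bdd : ∀ s : ℝ, 0 ≤ s → |g1 s| ≤ (∫ y, |A (x - y)| ∂μ) * C := by
      intro s hs
      rw [← Real.norm_eq_abs]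
      have hbnd : ∀ᵐ y ∂μ, ‖A (x - y) * f (X y s)‖ ≤ |A (x - y)| * C :=
        ae_of_all _ (fun y => by
          rw [Real.norm_eq_abs, abs_mul]
          exact mul_le_mul_of_nonneg_left (hC _) (abs_nonneg _))
      have := norm_integral_le_of_norm_le (hAbs.mul_const C) hbnd
      rw [MeasureTheory.integral_mul_const] at this
      exact this
    -- continuity of g1 on [0, ∞)
    have hg1cont : ContinuousOn g1 (Set.Ici 0) := by
      intro t₀ ht₀
      rw [Metric.continuousWithinAt_iff]
      intro ε hε
      set IA := ∫ y, |A (x - y)| ∂μ with hIAdef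
      have hIA0 : 0 ≤ IA := integral_nonneg (fun y => abs_nonneg _)
      have hden : (0:ℝ) < (L : ℝ) * IA + 1 := by positivity
      set ε' := ε / ((L : ℝ) * IA + 1) with hε'def
      have hε'pos : 0 < ε' := div_pos hε hden
      obtain ⟨δ, hδpos, hδ⟩ := hXuc t₀ ht₀ ε' hε'pos
      refine ⟨δ, hδpos, fun t ht hdist => ?_⟩
      have ht0 : (0:ℝ) ≤ t := ht
      rw [Real.dist_eq] at hdist
      have hXd := hδ t ht0 hdist
      have hsub : g1 t - g1 t₀ = ∫ y, (A (x - y) * f (X y t) - A (x - y) * f (X y t₀)) ∂μ :=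
        (integral_sub (hint t ht0) (hint t₀ ht₀)).symm
      have hb : |g1 t - g1 t₀| ≤ IA * ((L : ℝ) * ε') := by
        rw [hsub, ← Real.norm_eq_abs]
        have hbnd : ∀ᵐ y ∂μ, ‖A (x - y) * f (X y t) - A (x - y) * f (X y t₀)‖
            ≤ |A (x - y)| * ((L : ℝ) * ε') :=
          ae_of_all _ (fun y => by
            rw [Real.norm_eq_abs, ← mul_sub, abs_mul]
            refine mul_le_mul_of_nonneg_left ?_ (abs_nonneg _)
            have hd := hf.dist_le_mul (X y t) (X y t₀)
            rw [Real.dist_eq, Real.dist_eq] at hd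
            exact hd.trans (mul_le_mul_of_nonneg_left (hXd y) (NNReal.coe_nonneg L)))
        have := norm_integral_le_of_norm_le (hAbs.mul_const ((L : ℝ) * ε')) hbnd
        rw [MeasureTheory.integral_mul_const] at this
        exact this
      rw [Real.dist_eq]
      have : IA * ((L : ℝ) * ε') < ε := by
        have hmul : ε' * ((L : ℝ) * IA + 1) = ε := by
          rw [hε'def]; exact div_mul_cancel₀ ε hden.ne'
        nlinarith [hε'pos]
      linarith
    -- assemble h
    set c2 := ∫ y, B (x - y) * U y ∂μ with hc2def
    set l := (∫ y, A (x - y) * f (Xstar y) ∂μ) + c2 + Z x with hldef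
    set h : ℝ → ℝ := fun s => Hop μ A B U Z f (fun y => X y s) x with hhdef
    have hh : ∀ s, h s = g1 s + (c2 + Z x) := by
      intro s; simp only [hhdef, Hop, hg1def, hc2def]; ring
    have hlimh : Tendsto h atTop (nhds l) := by
      rw [hldef]
      have := hconv1.add (tendsto_const_nhds (x := c2 + Z x))
      refine (this.congr (fun s => (hh s).symm)).congr' ?_ |>.mono_right ?_
      · exact Eventually.of_forall (fun s => rfl)
      · exact le_of_eq (by rw [add_assoc])
    have hMb : ∀ s, 0 ≤ s → |h s| ≤ (∫ y, |A (x - y)| ∂μ) * C + |c2| + |Z x| := by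
      intro s hs
      rw [hh s]
      calc |g1 s + (c2 + Z x)| ≤ |g1 s| + |c2 + Z x| := abs_add_le _ _
      _ ≤ |g1 s| + (|c2| + |Z x|) := by linarith [abs_add_le c2 (Z x)]
      _ ≤ _ := by linarith [hg1bdd s hs]
    have hhcont : ContinuousOn h (Set.Ici 0) := by
      refine ContinuousOn.congr ?_ (fun s _ => hh s)
      exact hg1cont.add continuousOn_const
    -- apply the averaging lemma
    have havg := avg_lemma h _ hMb hhcont l hlimh
    have hX0lim : Tendsto (fun t : ℝ => Real.exp (-t) * X₀ x) atTop (nhds 0) := by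
      have := Real.tendsto_exp_neg_atTop_nhds_zero.mul_const (X₀ x)
      simpa using this
    have hrhs : Tendsto (fun t => X x t) atTop (nhds (0 + l)) := by
      refine (hX0lim.add havg).congr' ?_
      filter_upwards [eventually_ge_atTop (0:ℝ)] with t ht
      exact (hXeq t ht x).symm
    have := tendsto_nhds_unique (hlim x) hrhs
    rw [this, zero_add, hldef, hc2def]
  refine ⟨hstat, fun x => ?_⟩
  -- part 2: the lower bound
  have IAc : Integrable (fun y => A (x - y)) μ := hA.comp_sub_left x
  have IBc : Integrable (fun y => B (x - y)) μ := hB.comp_sub_left x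
  have hbddf : BddAbove (Set.range fun r : ℝ => |f r|) := ⟨C, by rintro _ ⟨r, rfl⟩; exact hC r⟩
  have hbddU : BddAbove (Set.range fun y : Fin N → ℚ_[p] => |U y|) :=
    ⟨CU, by rintro _ ⟨y, rfl⟩; exact hCU y⟩
  set Cf := ⨆ r : ℝ, |f r| with hCfdef
  set CU' := ⨆ y : Fin N → ℚ_[p], |U y| with hCU'def
  have hfCf : ∀ r, |f r| ≤ Cf := fun r => le_ciSup hbddf r
  have hUCU' : ∀ y, |U y| ≤ CU' := fun y => le_ciSup hbddU y
  have hCf0 : 0 ≤ Cf := le_trans (abs_nonneg _) (hfCf 0)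
  have hCU'0 : 0 ≤ CU' := le_trans (abs_nonneg _) (hUCU' 0)
  have hAchg : (∫ y, |A (x - y)| ∂μ) = ∫ y, |A y| ∂μ :=
    integral_sub_left_eq_self (fun y => |A y|) μ x
  have hBchg : (∫ y, |B (x - y)| ∂μ) = ∫ y, |B y| ∂μ :=
    integral_sub_left_eq_self (fun y => |B y|) μ x
  have hIA : |∫ y, A (x - y) * f (Xstar y) ∂μ| ≤ Cf * ∫ y, |A y| ∂μ := by
    rw [← Real.norm_eq_abs]
    have hbnd : ∀ᵐ y ∂μ, ‖A (x - y) * f (Xstar y)‖ ≤ |A (x - y)| * Cf :=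
      ae_of_all _ (fun y => by
        rw [Real.norm_eq_abs, abs_mul]
        exact mul_le_mul_of_nonneg_left (hfCf _) (abs_nonneg _))
    have := norm_integral_le_of_norm_le (IAc.abs.mul_const Cf) hbnd
    rw [MeasureTheory.integral_mul_const, hAchg, mul_comm] at this
    exact this
  have hIB : |∫ y, B (x - y) * U y ∂μ| ≤ CU' * ∫ y, |B y| ∂μ := by
    rw [← Real.norm_eq_abs]
    have hbnd : ∀ᵐ y ∂μ, ‖B (x - y) * U y‖ ≤ |B (x - y)| * CU' :=
      ae_of_all _ (fun y => by
        rw [Real.norm_eq_abs, abs_mul]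
        exact mul_le_mul_of_nonneg_left (hUCU' _) (abs_nonneg _))
    have := norm_integral_le_of_norm_le (IBc.abs.mul_const CU') hbnd
    rw [MeasureTheory.integral_mul_const, hBchg, mul_comm] at this
    exact this
  have := hstat x
  rw [this]
  have h1 := neg_abs_le (∫ y, A (x - y) * f (Xstar y) ∂μ)
  have h2 := neg_abs_le (∫ y, B (x - y) * U y ∂μ)
  linarith
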